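/- arXiv:2005.07789 — 3 statements merged into one kernel-verified Lean document; each statement's English description precedes it below -/
import Mathlib

section
/- Suppose (b_n) is a positive sequence, A ∈ 𝓔 with μ(A) ∈ (0,∞), and for all bounded μ-a.e. continuous g supported in A, b_n T̂^n g → μ(g) uniformly a.e. on A. Then for any B₁, B₂ ⊂ A with μ(∂B₁) = μ(∂B₂) = 0, μ(B₁ ∩ T^{-n} B₂) ~ b_n^{-1} μ(B₁) μ(B₂) as n → ∞, i.e., lim_n b_n μ(B₁ ∩ T^{-n} B₂) = μ(B₁) μ(B₂). -/
/-!
Write `g = 1_{B₁}`. Since `∂B₁` is null, `g` is continuous on `A` off a null set, so the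
uniform-return assumption gives `b_n T̂ⁿ g → μ(B₁)` uniformly on `A` minus a null set. Duality turns
`μ(B₁ ∩ T⁻ⁿ B₂) = ∫ g · 1_{B₂} ∘ Tⁿ` into `∫_{B₂} T̂ⁿ g`, and integrating the uniform limit over the
finite-measure set `B₂` yields `b_n μ(B₁ ∩ T⁻ⁿ B₂) → μ(B₁) μ(B₂)`.
-/

open MeasureTheory Set Topology Filter

section IndicatorContinuity

variable {X M : Type*} [TopologicalSpace X] [TopologicalSpace M] [Zero M]

theorem continuousWithinAt_indicator_const_of_notMem_closure_inter {A B : Set X} {x : X} (c : M)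
    (hxA : x ∈ A) (hx : x ∉ closure B ∩ closure (A \ B)) :
    ContinuousWithinAt (B.indicator fun _ => c) A x := by
  rcases not_and_or.1 hx with hx | hx
  · have hxB : x ∉ B := fun h => hx (subset_closure h)
    refine continuousWithinAt_const.congr_of_eventuallyEq ?_ (indicator_of_notMem hxB _)
    filter_upwards [mem_nhdsWithin_of_mem_nhds (isClosed_closure.isOpen_compl.mem_nhds hx)]
      with y hy
    exact indicator_of_notMem (fun h => hy (subset_closure h)) _
  · have mem_B : ∀ y ∈ A, y ∉ closure (A \ B) → y ∈ B :=
      fun y hyA hy => by_contra fun hyB => hy (subset_closure ⟨hyA, hyB⟩)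
    refine continuousWithinAt_const.congr_of_eventuallyEq ?_ (indicator_of_mem (mem_B x hxA hx) _)
    filter_upwards [mem_nhdsWithin_of_mem_nhds (isClosed_closure.isOpen_compl.mem_nhds hx),
      self_mem_nhdsWithin] with y hy hyA
    exact indicator_of_mem (mem_B y hyA hy) _

theorem setOf_not_continuousWithinAt_indicator_const_subset (A B : Set X) (c : M) :
    {x ∈ A | ¬ ContinuousWithinAt (B.indicator fun _ => c) A x} ⊆
      A ∩ closure B ∩ closure (A \ B) := by
  rintro x ⟨hxA, hx⟩
  by_contra hbd
  exact hx (continuousWithinAt_indicator_const_of_notMem_closure_inter c hxA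
    fun h => hbd ⟨⟨hxA, h.1⟩, h.2⟩)

end IndicatorContinuity

section UniformLimit

variable {α ι E : Type*} [MeasurableSpace α] [NormedAddCommGroup E] [NormedSpace ℝ E]
  [CompleteSpace E] {μ : Measure α}

theorem tendsto_setIntegral_of_tendstoUniformlyOn_diff_null {l : Filter ι} {F : ι → α → E}
    {c : E} {s N : Set α} (hs : μ s < ⊤) (hN : μ N = 0)
    (hF : ∀ i, IntegrableOn (F i) s μ) (h : TendstoUniformlyOn F (fun _ => c) l (s \ N)) :
    Tendsto (fun i => ∫ x in s, F i x ∂μ) l (𝓝 (μ.real s • c)) := by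
  rw [Metric.tendsto_nhds]
  intro ε hε
  have hδ : 0 < ε / (μ.real s + 1) := by positivity
  filter_upwards [Metric.tendstoUniformlyOn_iff.1 h _ hδ] with i hi
  have hbound : ∀ᵐ x ∂μ, x ∈ s → ‖F i x - c‖ ≤ ε / (μ.real s + 1) := by
    filter_upwards [measure_eq_zero_iff_ae_notMem.1 hN] with x hxN hxs
    rw [← dist_eq_norm, dist_comm]
    exact (hi x ⟨hxs, hxN⟩).le
  calc dist (∫ x in s, F i x ∂μ) (μ.real s • c)
      = ‖∫ x in s, (F i x - c) ∂μ‖ := by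
        rw [dist_eq_norm, integral_sub (hF i) (integrableOn_const hs.ne), setIntegral_const]
    _ ≤ ε / (μ.real s + 1) * μ.real s := norm_setIntegral_le_of_norm_le_const_ae' hs hbound
    _ < ε := by
        rw [div_mul_eq_mul_div, div_lt_iff₀ (by positivity)]
        nlinarith

end UniformLimit

theorem integrable_indicator_one_of_measure_lt_top {α : Type*} [MeasurableSpace α]
    {μ : Measure α} {s : Set α} (hs : MeasurableSet s) (hμs : μ s < ⊤) :
    Integrable (s.indicator (1 : α → ℝ)) μ :=
  (integrableOn_const (C := (1 : ℝ)) hμs.ne).integrable_indicator hs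

section Duality

variable {E : Type*} [MeasurableSpace E] {μ : Measure E} {T : E → E} {Tdual : (E → ℝ) → (E → ℝ)}

theorem integrable_iterate_of_integrable
    (hdint : ∀ f : E → ℝ, Integrable f μ → Integrable (Tdual f) μ) {f : E → ℝ}
    (hf : Integrable f μ) (n : ℕ) : Integrable (Tdual^[n] f) μ := by
  induction n with
  | zero => exact hf
  | succ n ih => rw [Function.iterate_succ_apply']; exact hdint _ ih

theorem integral_mul_comp_iterate_eq (hT : Measurable T)
    (hdint : ∀ f : E → ℝ, Integrable f μ → Integrable (Tdual f) μ)
    (hdual : ∀ f : E → ℝ, Integrable f μ →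
      ∀ g : E → ℝ, Measurable g → (∃ C : ℝ, ∀ x, |g x| ≤ C) →
      ∫ x, f x * g (T x) ∂μ = ∫ x, Tdual f x * g x ∂μ)
    (n : ℕ) {f h : E → ℝ} (hf : Integrable f μ) (hh : Measurable h)
    (hh_bdd : ∃ C : ℝ, ∀ x, |h x| ≤ C) :
    ∫ x, f x * h (T^[n] x) ∂μ = ∫ x, Tdual^[n] f x * h x ∂μ := by
  induction n generalizing f with
  | zero => rfl
  | succ n ih =>
    obtain ⟨C, hC⟩ := hh_bdd
    have hstep := hdual f hf (fun y => h (T^[n] y)) (hh.comp (hT.iterate n)) ⟨C, fun x => hC _⟩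
    simp only [Function.iterate_succ_apply] at hstep ⊢
    rw [hstep, ih (hdint f hf)]

theorem measureReal_inter_preimage_iterate_eq_setIntegral (hT : Measurable T)
    (hdint : ∀ f : E → ℝ, Integrable f μ → Integrable (Tdual f) μ)
    (hdual : ∀ f : E → ℝ, Integrable f μ →
      ∀ g : E → ℝ, Measurable g → (∃ C : ℝ, ∀ x, |g x| ≤ C) →
      ∫ x, f x * g (T x) ∂μ = ∫ x, Tdual f x * g x ∂μ)
    {B₁ B₂ : Set E} (hB₁ : MeasurableSet B₁) (hB₂ : MeasurableSet B₂) (hB₁fin : μ B₁ < ⊤)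
    (n : ℕ) :
    μ.real (B₁ ∩ T^[n] ⁻¹' B₂) = ∫ x in B₂, Tdual^[n] (B₁.indicator 1) x ∂μ := by
  have hbdd : ∃ C : ℝ, ∀ x, |B₂.indicator (1 : E → ℝ) x| ≤ C :=
    ⟨1, fun x => by by_cases hx : x ∈ B₂ <;> simp [hx]⟩
  have hduality := integral_mul_comp_iterate_eq hT hdint hdual n
    (integrable_indicator_one_of_measure_lt_top hB₁ hB₁fin)
    (measurable_one.indicator hB₂) hbdd
  have h_left : (fun x => B₁.indicator (1 : E → ℝ) x * B₂.indicator 1 (T^[n] x)) =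
      (B₁ ∩ T^[n] ⁻¹' B₂).indicator 1 := by
    ext x; rw [inter_indicator_one]; rfl
  have h_right : (fun x => Tdual^[n] (B₁.indicator 1) x * B₂.indicator 1 x) =
      B₂.indicator (Tdual^[n] (B₁.indicator 1)) := by
    ext x; by_cases hx : x ∈ B₂ <;> simp [hx]
  rw [h_left, h_right, integral_indicator_one (hB₁.inter (hT.iterate n hB₂)),
    integral_indicator hB₂] at hduality
  exact hduality

end Duality

theorem stmt4_general {E : Type*} [MeasurableSpace E] [TopologicalSpace E]
    (μ : Measure E)
    (T : E → E) (hT : Measurable T)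
    (Tdual : (E → ℝ) → (E → ℝ))
    (hdint : ∀ f : E → ℝ, Integrable f μ → Integrable (Tdual f) μ)
    (hdual : ∀ f : E → ℝ, Integrable f μ →
      ∀ g : E → ℝ, Measurable g → (∃ C : ℝ, ∀ x, |g x| ≤ C) →
      ∫ x, f x * g (T x) ∂μ = ∫ x, Tdual f x * g x ∂μ)
    (A : Set E) (hAfin : μ A < ⊤)
    (b : ℕ → ℝ)
    (hunif : ∀ g : E → ℝ, Measurable g → (∃ C : ℝ, ∀ x, |g x| ≤ C) →
      Function.support g ⊆ A →
      μ {x ∈ A | ¬ ContinuousWithinAt g A x} = 0 →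
      ∃ Nnull : Set E, μ Nnull = 0 ∧
        TendstoUniformlyOn (fun n x => b n * (Tdual^[n] g) x)
          (fun _ => ∫ x, g x ∂μ) atTop (A \ Nnull)) :
    ∀ B₁ B₂ : Set E, MeasurableSet B₁ → MeasurableSet B₂ → B₁ ⊆ A → B₂ ⊆ A →
      μ (A ∩ closure B₁ ∩ closure (A \ B₁)) = 0 →
      μ (A ∩ closure B₂ ∩ closure (A \ B₂)) = 0 →
      Tendsto (fun n => b n * (μ (B₁ ∩ T^[n] ⁻¹' B₂)).toReal) atTop
        (𝓝 ((μ B₁).toReal * (μ B₂).toReal)) := by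
  intro B₁ B₂ hB₁ hB₂ hB₁A hB₂A hB₁_bdry _
  have hB₁fin : μ B₁ < ⊤ := (measure_mono hB₁A).trans_lt hAfin
  have hB₂fin : μ B₂ < ⊤ := (measure_mono hB₂A).trans_lt hAfin
  have hg := integrable_indicator_one_of_measure_lt_top (μ := μ) hB₁ hB₁fin
  obtain ⟨N, hN, hconv⟩ := hunif (B₁.indicator 1) (measurable_one.indicator hB₁)
    ⟨1, fun x => by by_cases hx : x ∈ B₁ <;> simp [hx]⟩ (support_indicator_subset.trans hB₁A)
    (measure_mono_null (setOf_not_continuousWithinAt_indicator_const_subset A B₁ (1 : ℝ)) hB₁_bdry)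
  rw [integral_indicator_one hB₁] at hconv
  have hlim := tendsto_setIntegral_of_tendstoUniformlyOn_diff_null hB₂fin hN
    (fun n => ((integrable_iterate_of_integrable hdint hg n).const_mul (b n)).integrableOn)
    (hconv.mono (sdiff_subset_sdiff_left hB₂A))
  rw [smul_eq_mul, mul_comm] at hlim
  refine hlim.congr fun n => ?_
  rw [integral_const_mul, ← measureReal_inter_preimage_iterate_eq_setIntegral hT hdint hdual hB₁ hB₂
    hB₁fin n, measureReal_def]

/-- Under the uniform-return assumption `b_n T̂ⁿ g → μ(g)` uniformly a.e. on `A`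
(for bounded μ-a.e. continuous `g` supported in `A`), one has the mixing relation
`lim_n b_n μ(B₁ ∩ T^{-n}B₂) = μ(B₁) μ(B₂)` for all `B₁, B₂ ⊆ A` whose boundaries
(relative to `A`) are μ-null. -/
theorem stmt4 {E : Type*} [MeasurableSpace E] [TopologicalSpace E]
    (μ : Measure E) [SigmaFinite μ] (hEinf : μ Set.univ = ⊤)
    (T : E → E) (hT : Measurable T)
    (hTpres : ∀ B : Set E, MeasurableSet B → μ (T ⁻¹' B) = μ B)
    (Tdual : (E → ℝ) → (E → ℝ))
    (hdmeas : ∀ f : E → ℝ, Measurable f → Measurable (Tdual f))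
    (hdint : ∀ f : E → ℝ, Integrable f μ → Integrable (Tdual f) μ)
    (hdual : ∀ f : E → ℝ, Integrable f μ →
      ∀ g : E → ℝ, Measurable g → (∃ C : ℝ, ∀ x, |g x| ≤ C) →
      ∫ x, f x * g (T x) ∂μ = ∫ x, Tdual f x * g x ∂μ)
    (A : Set E) (hA : MeasurableSet A) (hA0 : 0 < μ A) (hAfin : μ A < ⊤)
    (b : ℕ → ℝ) (hb : ∀ n, 0 < b n)
    (hunif : ∀ g : E → ℝ, Measurable g → (∃ C : ℝ, ∀ x, |g x| ≤ C) →
      Function.support g ⊆ A →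
      μ {x ∈ A | ¬ ContinuousWithinAt g A x} = 0 →
      ∃ Nnull : Set E, μ Nnull = 0 ∧
        TendstoUniformlyOn (fun n x => b n * (Tdual^[n] g) x)
          (fun _ => ∫ x, g x ∂μ) atTop (A \ Nnull)) :
    ∀ B₁ B₂ : Set E, MeasurableSet B₁ → MeasurableSet B₂ → B₁ ⊆ A → B₂ ⊆ A →
      μ (A ∩ closure B₁ ∩ closure (A \ B₁)) = 0 →
      μ (A ∩ closure B₂ ∩ closure (A \ B₂)) = 0 →
      Tendsto (fun n => b n * (μ (B₁ ∩ T^[n] ⁻¹' B₂)).toReal) atTop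
        (𝓝 ((μ B₁).toReal * (μ B₂).toReal)) :=
  stmt4_general μ T hT Tdual hdint hdual A hAfin b hunif
end

section
/- Under Assumption 1 (uniform return with rate b_n ∈ RV_∞(1-β), β ∈ (0,1)), for every q ≥ 2 and every b ∈ (β-1, 0), there exists c > 0, independent of k₁,...,k_q, such that μ(⋂_{j=1}^q T^{-k_j} A) ≤ c (k₂-k₁)₁^b (k₃-k₂)₁^b ⋯ (k_q-k_{q-1})₁^b for all 1 ≤ k₁ ≤ ⋯ ≤ k_q, where (x)₁^b := (x ∨ 1)^b. -/
open MeasureTheory Set Topology Filter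

/-!
Duality turns `μ (A ∩ T⁻ⁿ S)` into `∫_S T̂ⁿ 1_A`, and uniform return bounds `T̂ⁿ 1_A` on `A`, off a
null set, by a constant times `1 / b_n`, which Potter's bound makes `O(nᵇ)`. Hence
`μ (A ∩ T⁻ⁿ S) ≤ C (n ∨ 1)ᵇ μ S` for all `n` and all `S ⊆ A` (small `n` by measure preservation
alone). Since `⋂ⱼ T^{-kⱼ} A = T^{-k₁} (A ∩ T^{-(k₂-k₁)} B)` with `B ⊆ A` an intersection of the same
shape, measure preservation and induction on `q` give the product bound.
-/

theorem exists_mul_add_one_rpow_le_of_eventually {u : ℕ → ℝ} (hu : ∀ n, 0 < u n) {a : ℝ}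
    (ha : 0 ≤ a) (h : ∀ᶠ n in atTop, 2 ^ a * u (n / 2) ≤ u n) :
    ∃ c > 0, ∀ n : ℕ, c * ((n : ℝ) + 1) ^ a ≤ u n := by
  obtain ⟨N, hN⟩ := eventually_atTop.mp h
  obtain ⟨m, -, hm⟩ := (Finset.range (2 * N + 1)).exists_min_image
    (fun n => u n / ((n : ℝ) + 1) ^ a) ⟨0, by simp⟩
  refine ⟨u m / ((m : ℝ) + 1) ^ a, by have := hu m; positivity, fun n => ?_⟩
  induction n using Nat.strong_induction_on with
  | _ n ih =>
    rcases le_or_gt n (2 * N) with hn | hn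
    · have := hm n (Finset.mem_range.mpr (by omega))
      rwa [le_div_iff₀ (by positivity)] at this
    · have hle : (n : ℝ) + 1 ≤ 2 * (((n / 2 : ℕ) : ℝ) + 1) := by
        exact_mod_cast (by omega : n + 1 ≤ 2 * (n / 2 + 1))
      calc u m / ((m : ℝ) + 1) ^ a * ((n : ℝ) + 1) ^ a
          ≤ u m / ((m : ℝ) + 1) ^ a * (2 * (((n / 2 : ℕ) : ℝ) + 1)) ^ a := by
            have := hu m
            gcongr
        _ = 2 ^ a * (u m / ((m : ℝ) + 1) ^ a * (((n / 2 : ℕ) : ℝ) + 1) ^ a) := by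
            rw [Real.mul_rpow (by norm_num) (by positivity)]; ring
        _ ≤ 2 ^ a * u (n / 2) := by gcongr; exact ih _ (by omega)
        _ ≤ u n := hN n (by omega)

-- Potter's bound, using regular variation of index `ρ` only at the ratio `1 / 2`.
theorem exists_inv_le_mul_max_rpow {u : ℕ → ℝ} (hu : ∀ n, 0 < u n) {ρ b : ℝ}
    (hrv : Tendsto (fun n : ℕ => u ⌊(1 / 2 : ℝ) * n⌋₊ / u n) atTop (𝓝 ((1 / 2) ^ ρ)))
    (hρb : -ρ < b) (hb : b ≤ 0) :
    ∃ c > 0, ∀ n : ℕ, 1 / u n ≤ c * max (n : ℝ) 1 ^ b := by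
  have hlt : (1 / 2 : ℝ) ^ ρ < 2 ^ b := by
    rw [show (2 : ℝ) ^ b = (1 / 2) ^ (-b) by
      rw [one_div, Real.inv_rpow zero_le_two, ← Real.rpow_neg zero_le_two, neg_neg]]
    exact Real.rpow_lt_rpow_of_exponent_gt (by norm_num) (by norm_num) (by linarith)
  have hhalf : ∀ᶠ n in atTop, 2 ^ (-b) * u (n / 2) ≤ u n := by
    filter_upwards [hrv.eventually_lt_const hlt] with n hn
    rw [one_div_mul_eq_div, Nat.floor_div_ofNat, Nat.floor_natCast,
      div_lt_iff₀ (hu n)] at hn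
    rw [Real.rpow_neg zero_le_two, inv_mul_le_iff₀ (by positivity)]
    exact hn.le
  obtain ⟨c, hc, hcu⟩ := exists_mul_add_one_rpow_le_of_eventually hu (neg_nonneg.mpr hb) hhalf
  refine ⟨c⁻¹, inv_pos.mpr hc, fun n => ?_⟩
  have hmax : max (n : ℝ) 1 ≤ n + 1 := max_le (by linarith) (by linarith [n.cast_nonneg (α := ℝ)])
  calc 1 / u n ≤ c⁻¹ * ((n : ℝ) + 1) ^ b := by
        have := hcu n
        rw [Real.rpow_neg (by positivity)] at this
        rw [← inv_inv ((n + 1 : ℝ) ^ b), ← mul_inv, ← one_div]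
        exact one_div_le_one_div_of_le (by positivity) this
    _ ≤ c⁻¹ * max (n : ℝ) 1 ^ b := by
        gcongr _ * ?_
        exact Real.rpow_le_rpow_of_nonpos (by positivity) hmax hb

theorem biInter_preimage_iterate_sum_succ {E : Type*} (T : E → E) (A : Set E) (d : ℕ → ℕ)
    (m : ℕ) :
    ⋂ j ∈ Finset.range (m + 2), T^[∑ i ∈ Finset.range j, d i] ⁻¹' A
      = A ∩ T^[d 0] ⁻¹' ⋂ j ∈ Finset.range (m + 1),
          T^[∑ i ∈ Finset.range j, d (i + 1)] ⁻¹' A := by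
  ext x
  simp only [mem_iInter, mem_inter_iff, mem_preimage, Finset.mem_range, Nat.forall_lt_succ_left,
    Finset.sum_range_succ', Finset.sum_range_zero, Function.iterate_zero_apply,
    Function.iterate_add_apply]

theorem one_le_rpow_neg_mul_rpow {x y b : ℝ} (hx : 0 < x) (hxy : x ≤ y) (hb : b ≤ 0) :
    1 ≤ y ^ (-b) * x ^ b :=
  calc 1 = y ^ (-b) * y ^ b := by
        rw [← Real.rpow_add (hx.trans_le hxy), neg_add_cancel, Real.rpow_zero]
    _ ≤ y ^ (-b) * x ^ b := by
      gcongr _ * ?_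
      · exact Real.rpow_nonneg (hx.le.trans hxy) _
      · exact Real.rpow_le_rpow_of_nonpos hx hxy hb

section Dynamics

variable {E : Type*} [MeasurableSpace E] {μ : Measure E} {T : E → E} {A S : Set E}

structure IsDualOperator (μ : Measure E) (T : E → E) (P : (E → ℝ) → (E → ℝ)) : Prop where
  integrable : ∀ f : E → ℝ, Integrable f μ → Integrable (P f) μ
  integral_mul_comp : ∀ f : E → ℝ, Integrable f μ → ∀ g : E → ℝ, Measurable g →
    (∃ C : ℝ, ∀ x, |g x| ≤ C) → ∫ x, f x * g (T x) ∂μ = ∫ x, P f x * g x ∂μ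

namespace IsDualOperator

variable {P : (E → ℝ) → (E → ℝ)}

theorem iterate (hP : IsDualOperator μ T P) (hT : Measurable T) (n : ℕ) :
    IsDualOperator μ T^[n] P^[n] := by
  induction n with
  | zero => exact ⟨fun f hf => hf, fun f _ g _ _ => rfl⟩
  | succ n ih =>
    refine ⟨fun f hf => ih.integrable _ (hP.integrable f hf), fun f hf g hg ⟨C, hC⟩ => ?_⟩
    simp only [Function.iterate_succ_apply]
    exact (hP.integral_mul_comp f hf (g ∘ T^[n]) (hg.comp (hT.iterate n)) ⟨C, fun x => hC _⟩).trans
      (ih.integral_mul_comp _ (hP.integrable f hf) g hg ⟨C, hC⟩)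

theorem measure_inter_preimage_eq_setIntegral (hP : IsDualOperator μ T P) (hT : Measurable T)
    (hA : MeasurableSet A) (hAfin : μ A < ⊤) (hS : MeasurableSet S) :
    (μ (A ∩ T ⁻¹' S)).toReal = ∫ x in S, P (A.indicator 1) x ∂μ := by
  calc (μ (A ∩ T ⁻¹' S)).toReal = ∫ x, A.indicator 1 x * S.indicator 1 (T x) ∂μ := by
        change μ.real _ = _
        rw [← integral_indicator_one (hA.inter (hT hS)), inter_indicator_one]
        rfl
    _ = ∫ x, P (A.indicator 1) x * S.indicator 1 x ∂μ :=
        hP.integral_mul_comp _ ((integrable_indicator_iff hA).mpr (integrableOn_const hAfin.ne))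
          _ (measurable_one.indicator hS)
          ⟨1, fun x => by by_cases hx : x ∈ S <;> simp [hx]⟩
    _ = ∫ x in S, P (A.indicator 1) x ∂μ := by
        rw [← integral_indicator hS]
        congr 1 with x
        by_cases hx : x ∈ S <;> simp [hx]

theorem measure_inter_preimage_le_of_ae_le (hP : IsDualOperator μ T P) (hT : Measurable T)
    (hA : MeasurableSet A) (hAfin : μ A < ⊤) (hS : MeasurableSet S) (hSfin : μ S < ⊤)
    {K : ℝ} (hK : ∀ᵐ x ∂μ, x ∈ S → P (A.indicator 1) x ≤ K) :
    (μ (A ∩ T ⁻¹' S)).toReal ≤ K * (μ S).toReal := by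
  have hint : Integrable (P (A.indicator 1)) μ :=
    hP.integrable _ ((integrable_indicator_iff hA).mpr (integrableOn_const hAfin.ne))
  rw [hP.measure_inter_preimage_eq_setIntegral hT hA hAfin hS, mul_comm]
  calc ∫ x in S, P (A.indicator 1) x ∂μ ≤ ∫ _ in S, K ∂μ :=
        integral_mono_ae hint.integrableOn (integrableOn_const hSfin.ne)
          ((ae_restrict_iff' hS).mpr hK)
    _ = (μ S).toReal * K := by rw [setIntegral_const, smul_eq_mul, Measure.real]

end IsDualOperator

theorem exists_measure_inter_preimage_iterate_le (hT : MeasurePreserving T μ μ)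
    {P : (E → ℝ) → (E → ℝ)} (hP : IsDualOperator μ T P) (hA : MeasurableSet A)
    (hAfin : μ A < ⊤) {b : ℝ} (hb : b ≤ 0) {u : ℕ → ℝ} (hu : ∀ n, 0 < u n) {c : ℝ}
    (hc : ∀ n : ℕ, 1 / u n ≤ c * max (n : ℝ) 1 ^ b) {N : Set E} (hN : μ N = 0) {M : ℝ}
    (hM : 0 ≤ M) (hPA : ∀ᶠ n in atTop, ∀ x ∈ A \ N, u n * P^[n] (A.indicator 1) x ≤ M) :
    ∃ C > 0, ∀ n (S : Set E), MeasurableSet S → S ⊆ A →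
      (μ (A ∩ T^[n] ⁻¹' S)).toReal ≤ C * max (n : ℝ) 1 ^ b * (μ S).toReal := by
  obtain ⟨n₀, hn₀⟩ := eventually_atTop.mp hPA
  set R : ℝ := max n₀ 1
  refine ⟨max (R ^ (-b)) (M * c), lt_max_of_lt_left (by positivity), fun n S hS hSA => ?_⟩
  have hSfin : μ S < ⊤ := (measure_mono hSA).trans_lt hAfin
  rcases lt_or_ge n n₀ with hn | hn
  · have hsmall : 1 ≤ R ^ (-b) * max (n : ℝ) 1 ^ b :=
      one_le_rpow_neg_mul_rpow (by positivity) (max_le_max_right 1 (by exact_mod_cast hn.le)) hb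
    calc (μ (A ∩ T^[n] ⁻¹' S)).toReal ≤ 1 * (μ S).toReal := by
          rw [one_mul]
          exact ENNReal.toReal_mono hSfin.ne ((measure_mono inter_subset_right).trans_eq
            ((hT.iterate n).measure_preimage hS.nullMeasurableSet))
      _ ≤ max (R ^ (-b)) (M * c) * max (n : ℝ) 1 ^ b * (μ S).toReal := by
          gcongr
          exact hsmall.trans (by gcongr; exact le_max_left _ _)
  · have hK : ∀ᵐ x ∂μ, x ∈ S → P^[n] (A.indicator 1) x ≤ M * (1 / u n) := by
      filter_upwards [measure_eq_zero_iff_ae_notMem.mp hN] with x hxN hxS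
      rw [← div_eq_mul_one_div, le_div_iff₀' (hu n)]
      exact hn₀ n hn x ⟨hSA hxS, hxN⟩
    calc (μ (A ∩ T^[n] ⁻¹' S)).toReal ≤ M * (1 / u n) * (μ S).toReal :=
          (hP.iterate hT.measurable n).measure_inter_preimage_le_of_ae_le
            (hT.measurable.iterate n) hA hAfin hS hSfin hK
      _ ≤ M * (c * max (n : ℝ) 1 ^ b) * (μ S).toReal := by gcongr; exact hc n
      _ ≤ max (R ^ (-b)) (M * c) * max (n : ℝ) 1 ^ b * (μ S).toReal := by
          rw [← mul_assoc]; gcongr; exact le_max_right _ _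

theorem measure_biInter_preimage_iterate_sum_le_prod (hT : Measurable T)
    (hA : MeasurableSet A) {φ : ℕ → ℝ} (hφ : ∀ n, 0 ≤ φ n)
    (hstep : ∀ n (S : Set E), MeasurableSet S → S ⊆ A →
      (μ (A ∩ T^[n] ⁻¹' S)).toReal ≤ φ n * (μ S).toReal)
    (m : ℕ) (d : ℕ → ℕ) :
    (μ (⋂ j ∈ Finset.range (m + 1), T^[∑ i ∈ Finset.range j, d i] ⁻¹' A)).toReal
      ≤ (∏ j ∈ Finset.range m, φ (d j)) * (μ A).toReal := by
  induction m generalizing d with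
  | zero => simp
  | succ m ih =>
    set B := ⋂ j ∈ Finset.range (m + 1), T^[∑ i ∈ Finset.range j, d (i + 1)] ⁻¹' A
    have hB : MeasurableSet B :=
      Finset.measurableSet_biInter _ fun j _ => hT.iterate _ hA
    have hBA : B ⊆ A := biInter_subset_of_mem (t := fun j => T^[_] ⁻¹' A) (by simp : 0 ∈ _)
    rw [biInter_preimage_iterate_sum_succ, Finset.prod_range_succ', mul_comm _ (φ (d 0)),
      mul_assoc]
    exact (hstep _ B hB hBA).trans (mul_le_mul_of_nonneg_left (ih _) (hφ _))

theorem measure_biInter_preimage_iterate_le_prod (hT : MeasurePreserving T μ μ)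
    (hA : MeasurableSet A) {φ : ℕ → ℝ} (hφ : ∀ n, 0 ≤ φ n)
    (hstep : ∀ n (S : Set E), MeasurableSet S → S ⊆ A →
      (μ (A ∩ T^[n] ⁻¹' S)).toReal ≤ φ n * (μ S).toReal)
    (m : ℕ) {k : ℕ → ℕ} (hk : Monotone k) :
    (μ (⋂ j ∈ Finset.range (m + 1), T^[k j] ⁻¹' A)).toReal
      ≤ (∏ j ∈ Finset.range m, φ (k (j + 1) - k j)) * (μ A).toReal := by
  have hshift : ⋂ j ∈ Finset.range (m + 1), T^[k j] ⁻¹' A = T^[k 0] ⁻¹'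
      ⋂ j ∈ Finset.range (m + 1), T^[∑ i ∈ Finset.range j, (k (i + 1) - k i)] ⁻¹' A := by
    simp only [Finset.sum_range_tsub hk, preimage_iInter₂, ← preimage_comp,
      ← Function.iterate_add, Nat.sub_add_cancel (hk (Nat.zero_le _))]
  rw [hshift, (hT.iterate _).measure_preimage
    (Finset.measurableSet_biInter _ fun j _ => hT.measurable.iterate _ hA).nullMeasurableSet]
  exact measure_biInter_preimage_iterate_sum_le_prod hT.measurable hA hφ hstep m _

end Dynamics

theorem stmt6_general {E : Type*} [MeasurableSpace E] [TopologicalSpace E]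
    (μ : Measure E)
    (T : E → E) (hT : Measurable T)
    (hTpres : ∀ B : Set E, MeasurableSet B → μ (T ⁻¹' B) = μ B)
    (Tdual : (E → ℝ) → (E → ℝ))
    (hdint : ∀ f : E → ℝ, Integrable f μ → Integrable (Tdual f) μ)
    (hdual : ∀ f : E → ℝ, Integrable f μ →
      ∀ g : E → ℝ, Measurable g → (∃ C : ℝ, ∀ x, |g x| ≤ C) →
      ∫ x, f x * g (T x) ∂μ = ∫ x, Tdual f x * g x ∂μ)
    (A : Set E) (hA : MeasurableSet A) (hA0 : 0 < μ A) (hAfin : μ A < ⊤)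
    (β : ℝ)
    (bseq : ℕ → ℝ) (hbpos : ∀ n, 0 < bseq n)
    (hrv : ∀ lam : ℝ, 0 < lam →
      Tendsto (fun n : ℕ => bseq ⌊lam * (n : ℝ)⌋₊ / bseq n) atTop (𝓝 (lam ^ (1 - β))))
    (hunif : ∀ g : E → ℝ, Measurable g → (∃ C : ℝ, ∀ x, |g x| ≤ C) →
      Function.support g ⊆ A →
      μ {x ∈ A | ¬ ContinuousWithinAt g A x} = 0 →
      ∃ Nnull : Set E, μ Nnull = 0 ∧
        TendstoUniformlyOn (fun n x => bseq n * (Tdual^[n] g) x)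
          (fun _ => ∫ x, g x ∂μ) atTop (A \ Nnull)) :
    ∀ q : ℕ, 2 ≤ q → ∀ b : ℝ, β - 1 < b → b < 0 →
      ∃ c : ℝ, 0 < c ∧ ∀ k : ℕ → ℕ, (∀ i j, i ≤ j → k i ≤ k j) → 1 ≤ k 0 →
        (μ (⋂ j ∈ Finset.range q, T^[k j] ⁻¹' A)).toReal
          ≤ c * ∏ j ∈ Finset.range (q - 1),
              (max ((k (j + 1) : ℝ) - (k j : ℝ)) 1) ^ b := by
  intro q hq b hb1 hb2
  have hTμ : MeasurePreserving T μ μ :=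
    ⟨hT, Measure.ext fun B hB => by rw [Measure.map_apply hT hB, hTpres B hB]⟩
  obtain ⟨c, -, hc⟩ :=
    exists_inv_le_mul_max_rpow hbpos (hrv _ one_half_pos) (by linarith) hb2.le
  have hcont : ∀ x ∈ A, ContinuousWithinAt (A.indicator (1 : E → ℝ)) A x := fun x hx =>
    continuousWithinAt_const.congr (fun y hy => indicator_of_mem hy _) (indicator_of_mem hx _)
  obtain ⟨N, hN, hconv⟩ := hunif _ (measurable_one.indicator hA)
    ⟨1, fun x => by by_cases hx : x ∈ A <;> simp [hx]⟩ support_indicator_subset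
    (measure_mono_null (fun x hx => (hx.2 (hcont x hx.1)).elim) measure_empty)
  obtain ⟨C, hC, hstep⟩ := exists_measure_inter_preimage_iterate_le hTμ ⟨hdint, hdual⟩ hA hAfin
    hb2.le hbpos hc hN (M := ∫ x, A.indicator 1 x ∂μ + 1)
    (add_nonneg (integral_nonneg (indicator_nonneg fun _ _ => zero_le_one)) zero_le_one)
    ((hconv.eventually_forall_lt (lt_add_one _) fun _ _ => le_rfl).mono
      fun n hn x hx => (hn x hx).le)
  refine ⟨C ^ (q - 1) * (μ A).toReal,
    by have := ENNReal.toReal_pos hA0.ne' hAfin.ne; positivity, fun k hk _ => ?_⟩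
  obtain ⟨m, rfl⟩ : ∃ m, q = m + 1 := ⟨q - 1, by omega⟩
  calc (μ (⋂ j ∈ Finset.range (m + 1), T^[k j] ⁻¹' A)).toReal
      ≤ (∏ j ∈ Finset.range m, C * max ((k (j + 1) - k j : ℕ) : ℝ) 1 ^ b) * (μ A).toReal :=
        measure_biInter_preimage_iterate_le_prod (φ := fun n => C * max (n : ℝ) 1 ^ b) hTμ hA
          (fun n => by positivity) hstep m fun i j => hk i j
    _ = _ := by
        rw [Finset.prod_mul_distrib, Finset.prod_const, Finset.card_range, Nat.add_sub_cancel,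
          Finset.prod_congr rfl fun j _ => by rw [Nat.cast_sub (hk _ _ j.le_succ)]]
        ring

/-- Under Assumption 1 (uniform return with rate `b_n ∈ RV_∞(1-β)`, `β ∈ (0,1)`),
for every `q ≥ 2` and `b ∈ (β-1, 0)` there is `c > 0` such that
`μ(⋂_{j=1}^q T^{-k_j} A) ≤ c (k₂-k₁)₁^b ⋯ (k_q-k_{q-1})₁^b` for all
`1 ≤ k₁ ≤ ⋯ ≤ k_q`, where `(x)₁^b = (x ∨ 1)^b`. -/
theorem stmt6 {E : Type*} [MeasurableSpace E] [TopologicalSpace E]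
    (μ : Measure E) [SigmaFinite μ] (hEinf : μ Set.univ = ⊤)
    (T : E → E) (hT : Measurable T)
    (hTpres : ∀ B : Set E, MeasurableSet B → μ (T ⁻¹' B) = μ B)
    (Tdual : (E → ℝ) → (E → ℝ))
    (hdmeas : ∀ f : E → ℝ, Measurable f → Measurable (Tdual f))
    (hdint : ∀ f : E → ℝ, Integrable f μ → Integrable (Tdual f) μ)
    (hdual : ∀ f : E → ℝ, Integrable f μ →
      ∀ g : E → ℝ, Measurable g → (∃ C : ℝ, ∀ x, |g x| ≤ C) →
      ∫ x, f x * g (T x) ∂μ = ∫ x, Tdual f x * g x ∂μ)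
    (A : Set E) (hA : MeasurableSet A) (hA0 : 0 < μ A) (hAfin : μ A < ⊤)
    (β : ℝ) (hβ0 : 0 < β) (hβ1 : β < 1)
    (bseq : ℕ → ℝ) (hbpos : ∀ n, 0 < bseq n)
    (hrv : ∀ lam : ℝ, 0 < lam →
      Tendsto (fun n : ℕ => bseq ⌊lam * (n : ℝ)⌋₊ / bseq n) atTop (𝓝 (lam ^ (1 - β))))
    (hunif : ∀ g : E → ℝ, Measurable g → (∃ C : ℝ, ∀ x, |g x| ≤ C) →
      Function.support g ⊆ A →
      μ {x ∈ A | ¬ ContinuousWithinAt g A x} = 0 →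
      ∃ Nnull : Set E, μ Nnull = 0 ∧
        TendstoUniformlyOn (fun n x => bseq n * (Tdual^[n] g) x)
          (fun _ => ∫ x, g x ∂μ) atTop (A \ Nnull)) :
    ∀ q : ℕ, 2 ≤ q → ∀ b : ℝ, β - 1 < b → b < 0 →
      ∃ c : ℝ, 0 < c ∧ ∀ k : ℕ → ℕ, (∀ i j, i ≤ j → k i ≤ k j) → 1 ≤ k 0 →
        (μ (⋂ j ∈ Finset.range q, T^[k j] ⁻¹' A)).toReal
          ≤ c * ∏ j ∈ Finset.range (q - 1),
              (max ((k (j + 1) : ℝ) - (k j : ℝ)) 1) ^ b :=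
  stmt6_general μ T hT hTpres Tdual hdint hdual A hA hA0 hAfin β bseq hbpos hrv hunif
end

section
/- Let p ≥ 2 and β ∈ (0,1) with p(β-1) < -1, and fix b satisfying (β-1) ∨ (-(1/(p-1))) < b < -1/p. Let r ≥ 2, and let d₂,...,d_r ∈ {0,1,...,p}. Define L = |{2 ≤ u ≤ r : d_u < p}| + 1 and m = pL - Σ_{u=2}^r d_u 1_{d_u < p}. Then there exists c > 0 (depending only on p, r, b) such that Σ_{1 ≤ k₁ ≤ ⋯ ≤ k_r ≤ n} Π_{u=2}^r (k_u - k_{u-1})₁^{d_u b} ≤ c n^{(pb+1)L - bm} for all n ≥ 1, where (x)₁^a := (x ∨ 1)^a. -/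
/-!
Encode a monotone sequence `1 ≤ k₁ ≤ ⋯ ≤ k_r ≤ n` by its first term and its increments
`k_{u+1} - k_u < n`; this is injective, so the sum is at most `n` times a product of the
one-dimensional sums `∑_{x<n} (x)₁^{d_u b}`. Each of these is `O(n^{d_u b + 1})` when
`d_u < p` (then `-1 < d_u b ≤ 0`) and `O(1)` when `d_u = p` (then `p b < -1`), and the
exponents add up to `(pb+1)L - bm`.
-/

open Finset

theorem mul_rpow_sub_one_le_rpow_sub_rpow {q x : ℝ} (hq0 : 0 ≤ q) (hq1 : q ≤ 1)
    (hx : 0 ≤ x) :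
    q * (x + 1) ^ (q - 1) ≤ (x + 1) ^ q - x ^ q := by
  have hy : 0 < x + 1 := by linarith
  have hinv : 1 / (x + 1) ≤ 1 := by rw [div_le_one hy]; linarith
  -- Bernoulli's inequality applied to `x = (x + 1) * (1 - 1 / (x + 1))`
  have hbern : (1 + -(1 / (x + 1))) ^ q ≤ 1 + q * -(1 / (x + 1)) :=
    rpow_one_add_le_one_add_mul_self (by linarith) hq0 hq1
  have hx_eq : x = (x + 1) * (1 + -(1 / (x + 1))) := by field_simp; ring
  calc q * (x + 1) ^ (q - 1) = (x + 1) ^ q - (x + 1) ^ q * (1 + q * -(1 / (x + 1))) := by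
        rw [Real.rpow_sub hy, Real.rpow_one]; ring
    _ ≤ (x + 1) ^ q - x ^ q := by
        rw [hx_eq, Real.mul_rpow hy.le (by linarith), ← hx_eq]
        gcongr

theorem sum_range_add_one_rpow_le {a : ℝ} (ha1 : -1 < a) (ha0 : a ≤ 0) (n : ℕ) :
    ∑ x ∈ range n, ((x : ℝ) + 1) ^ a ≤ (n : ℝ) ^ (a + 1) / (a + 1) := by
  have hpos : 0 < a + 1 := by linarith
  rw [le_div_iff₀ hpos, sum_mul]
  calc ∑ x ∈ range n, ((x : ℝ) + 1) ^ a * (a + 1)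
      ≤ ∑ x ∈ range n, (((x + 1 : ℕ) : ℝ) ^ (a + 1) - ((x : ℕ) : ℝ) ^ (a + 1)) := by
        gcongr with x
        have := mul_rpow_sub_one_le_rpow_sub_rpow hpos.le (by linarith) x.cast_nonneg
        push_cast
        rw [add_sub_cancel_right] at this
        linarith
    _ = (n : ℝ) ^ (a + 1) := by
        rw [sum_range_sub (fun x : ℕ => ((x : ℝ)) ^ (a + 1))]
        simp [Real.zero_rpow hpos.ne']

theorem max_one_rpow_le {a x : ℝ} (ha : a ≤ 0) (hx : 0 ≤ x) :
    max x 1 ^ a ≤ 2 ^ (-a) * (x + 1) ^ a := by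
  have hhalf : (x + 1) / 2 ≤ max x 1 := by
    rcases le_total x 1 with h | h <;> simp [h] <;> linarith
  calc max x 1 ^ a ≤ ((x + 1) / 2) ^ a := Real.rpow_le_rpow_of_nonpos (by linarith) hhalf ha
    _ = 2 ^ (-a) * (x + 1) ^ a := by
        rw [Real.div_rpow (by linarith) zero_le_two, Real.rpow_neg zero_le_two]; ring

theorem exists_sum_range_max_one_rpow_le {a : ℝ} (ha0 : a ≤ 0) (ha1 : a ≠ -1) :
    ∃ c : ℝ, 0 < c ∧ ∀ n : ℕ,
      ∑ x ∈ range n, max (x : ℝ) 1 ^ a ≤ c * (n : ℝ) ^ max (a + 1) 0 := by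
  have hcmp : ∀ n : ℕ, ∑ x ∈ range n, max (x : ℝ) 1 ^ a
      ≤ 2 ^ (-a) * ∑ x ∈ range n, ((x : ℝ) + 1) ^ a := fun n => by
    rw [mul_sum]
    exact sum_le_sum fun x _ => max_one_rpow_le ha0 (Nat.cast_nonneg x)
  rcases ha1.lt_or_gt with hlt | hgt
  · have hsum : Summable fun x : ℕ => ((x : ℝ) + 1) ^ a := by
      have := (summable_nat_add_iff 1).mpr (Real.summable_nat_rpow.mpr hlt)
      simpa using this
    refine ⟨2 ^ (-a) * ∑' x : ℕ, ((x : ℝ) + 1) ^ a, ?_, fun n => ?_⟩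
    · exact mul_pos (by positivity) (hsum.tsum_pos (fun x => by positivity) 0 (by simp))
    · rw [max_eq_right (by linarith), Real.rpow_zero, mul_one]
      refine (hcmp n).trans (mul_le_mul_of_nonneg_left ?_ (by positivity))
      exact hsum.sum_le_tsum _ fun x _ => by positivity
  · have hpos : 0 < a + 1 := by linarith
    refine ⟨2 ^ (-a) / (a + 1), by positivity, fun n => ?_⟩
    rw [max_eq_left hpos.le, div_mul_eq_mul_div, mul_div_assoc]
    exact (hcmp n).trans
      (mul_le_mul_of_nonneg_left (sum_range_add_one_rpow_le hgt ha0 n) (by positivity))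

theorem prod_attach_range_eq_prod_fin {M : Type*} [CommMonoid M] (r : ℕ)
    (f : (j : ℕ) → j < r → M) :
    ∏ j ∈ (range r).attach, f j (mem_range.1 j.2) = ∏ j : Fin r, f j j.2 :=
  prod_nbij' (fun j => ⟨j.1, mem_range.1 j.2⟩) (fun j => ⟨j.1, mem_range.2 j.2⟩)
    (by simp) (by simp) (by simp) (by simp) (by simp)

theorem sum_monotone_prod_le (n r : ℕ) (w : Fin r → ℝ → ℝ) (hw : ∀ j t, 0 ≤ w j t) :
    ∑ k ∈ (Fintype.piFinset fun _ : Fin (r + 1) => Icc 1 n).filter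
        (fun k => ∀ i j, i ≤ j → k i ≤ k j),
        ∏ j, w j ((k j.succ : ℝ) - k j.castSucc)
      ≤ n * ∏ j, ∑ x ∈ range n, w j x := by
  set s := (Fintype.piFinset fun _ : Fin (r + 1) => Icc 1 n).filter
    (fun k => ∀ i j, i ≤ j → k i ≤ k j)
  let gaps : (Fin (r + 1) → ℕ) → ℕ × (Fin r → ℕ) :=
    fun k => (k 0, fun j => k j.succ - k j.castSucc)
  let G : ℕ × (Fin r → ℕ) → ℝ := fun q => ∏ j, w j (q.2 j)
  have hmono : ∀ k ∈ s, Monotone k := fun k hk => (mem_filter.1 hk).2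
  have hsummand : ∀ k ∈ s, ∏ j, w j ((k j.succ : ℝ) - k j.castSucc) = G (gaps k) := by
    intro k hk
    refine prod_congr rfl fun j _ => ?_
    rw [Nat.cast_sub (hmono k hk (Fin.castSucc_le_succ j))]
  have hinj : Set.InjOn gaps s := by
    intro k hk l hl hkl
    simp only [gaps, Prod.mk.injEq, funext_iff] at hkl
    funext i
    induction i using Fin.induction with
    | zero => exact hkl.1
    | succ j ih =>
      have := hkl.2 j
      have := hmono k hk (Fin.castSucc_le_succ j)
      have := hmono l hl (Fin.castSucc_le_succ j)
      omega
  have hmaps : s.image gaps ⊆ Icc 1 n ×ˢ Fintype.piFinset fun _ : Fin r => range n := by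
    intro q hq
    obtain ⟨k, hk, rfl⟩ := mem_image.1 hq
    have hbound := Fintype.mem_piFinset.1 (mem_filter.1 hk).1
    refine mem_product.2 ⟨hbound 0, Fintype.mem_piFinset.2 fun j => ?_⟩
    have := mem_Icc.1 (hbound j.succ)
    have := mem_Icc.1 (hbound j.castSucc)
    simp only [gaps, mem_range]
    omega
  calc ∑ k ∈ s, ∏ j, w j ((k j.succ : ℝ) - k j.castSucc)
      = ∑ q ∈ s.image gaps, G q := by rw [sum_image hinj]; exact sum_congr rfl hsummand
    _ ≤ ∑ q ∈ Icc 1 n ×ˢ Fintype.piFinset fun _ : Fin r => range n, G q :=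
        sum_le_sum_of_subset_of_nonneg hmaps fun q _ _ => prod_nonneg fun j _ => hw _ _
    _ = n * ∏ j, ∑ x ∈ range n, w j x := by
        rw [sum_product, prod_univ_sum]
        simp [G]

section Exponents

variable {p : ℕ} {b : ℝ}

theorem neg_one_lt_natCast_mul (hp : 1 < p) (hb1 : -(1 / ((p : ℝ) - 1)) < b)
    (hb2 : b < -(1 / (p : ℝ))) {d : ℕ} (hd : d < p) : -1 < (d : ℝ) * b := by
  have hp1 : (0 : ℝ) < p - 1 := by
    have : (1 : ℝ) < p := by exact_mod_cast hp
    linarith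
  have hb0 : b < 0 := hb2.trans_le (by simp)
  have hdp : (d : ℝ) ≤ p - 1 := by
    have : (d : ℝ) + 1 ≤ p := by exact_mod_cast hd
    linarith
  calc -1 = ((p : ℝ) - 1) * -(1 / ((p : ℝ) - 1)) := by field_simp
    _ < (p - 1) * b := mul_lt_mul_of_pos_left hb1 hp1
    _ ≤ d * b := mul_le_mul_of_nonpos_right hdp hb0.le

theorem natCast_mul_lt_neg_one (hp : 0 < p) (hb2 : b < -(1 / (p : ℝ))) : (p : ℝ) * b < -1 := by
  have hp0 : (0 : ℝ) < p := by exact_mod_cast hp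
  calc (p : ℝ) * b < p * -(1 / (p : ℝ)) := mul_lt_mul_of_pos_left hb2 hp0
    _ = -1 := by field_simp

theorem sum_range_max_mul_add_one_zero (hp : 1 < p) (hb1 : -(1 / ((p : ℝ) - 1)) < b)
    (hb2 : b < -(1 / (p : ℝ))) (d : ℕ → ℕ) (hd : ∀ u, d u ≤ p) (r : ℕ) :
    ∑ i ∈ range r, max ((d (i + 2) : ℝ) * b + 1) 0
      = ((Icc 2 (r + 1)).filter (fun u => d u < p)).card
        + b * ∑ u ∈ (Icc 2 (r + 1)).filter (fun u => d u < p), (d u : ℝ) := by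
  have hite : ∀ u, max ((d u : ℝ) * b + 1) 0 = if d u < p then (d u : ℝ) * b + 1 else 0 := by
    intro u
    split_ifs with h
    · exact max_eq_left (by linarith [neg_one_lt_natCast_mul hp hb1 hb2 h])
    · have hdu : d u = p := le_antisymm (hd u) (not_lt.1 h)
      rw [hdu]
      exact max_eq_right (by linarith [natCast_mul_lt_neg_one (p := p) (by omega) hb2])
  have hIcc : Icc 2 (r + 1) = Ico 2 (2 + r) := by ext; simp; omega
  calc ∑ i ∈ range r, max ((d (i + 2) : ℝ) * b + 1) 0
      = ∑ u ∈ Icc 2 (r + 1), max ((d u : ℝ) * b + 1) 0 := by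
        rw [hIcc, sum_Ico_eq_sum_range, Nat.add_sub_cancel_left]
        simp only [add_comm 2]
    _ = ∑ u ∈ (Icc 2 (r + 1)).filter (fun u => d u < p), ((d u : ℝ) * b + 1) := by
        rw [sum_filter]; exact sum_congr rfl fun u _ => hite u
    _ = _ := by rw [sum_add_distrib, sum_const, ← sum_mul, nsmul_eq_mul, mul_one]; ring

end Exponents

/-- The key off-diagonal sum estimate in the CLT proof:
`Σ_{1 ≤ k₁ ≤ ⋯ ≤ k_r ≤ n} Π_{u=2}^r (k_u - k_{u-1})₁^{d_u b} ≤ c n^{(pb+1)L - bm}`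
where `L = #{2 ≤ u ≤ r : d_u < p} + 1` and `m = pL - Σ_{u=2}^r d_u 1_{d_u<p}`. -/
theorem stmt7 (p r : ℕ) (hp : 2 ≤ p) (hr : 2 ≤ r) (β b : ℝ)
    (hb1 : max (β - 1) (-(1 / ((p : ℝ) - 1))) < b) (hb2 : b < -(1 / (p : ℝ)))
    (d : ℕ → ℕ) (hd : ∀ u, d u ≤ p)
    (L m : ℤ)
    (hL : L = ((Finset.Icc 2 r).filter (fun u => d u < p)).card + 1)
    (hm : m = (p : ℤ) * L - ∑ u ∈ (Finset.Icc 2 r).filter (fun u => d u < p), (d u : ℤ)) :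
    ∃ c : ℝ, 0 < c ∧ ∀ n : ℕ, 1 ≤ n →
      ∑ k ∈ (Fintype.piFinset (fun _ : Fin r => Finset.Icc 1 n)).filter
          (fun k : Fin r → ℕ => ∀ i j : Fin r, i ≤ j → k i ≤ k j),
        ∏ j ∈ (Finset.range (r - 1)).attach,
          (max ((k ⟨j.1 + 1, by have := Finset.mem_range.mp j.2; omega⟩ : ℝ)
              - (k ⟨j.1, by have := Finset.mem_range.mp j.2; omega⟩ : ℝ)) 1)
            ^ ((d (j.1 + 2) : ℝ) * b)
      ≤ c * (n : ℝ) ^ ((((p : ℝ) * b + 1) * (L : ℝ)) - b * (m : ℝ)) := by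
  obtain ⟨r, rfl⟩ : ∃ r', r = r' + 1 := ⟨r - 1, by omega⟩
  have hb1' : -(1 / ((p : ℝ) - 1)) < b := (le_max_right _ _).trans_lt hb1
  have hgap : ∀ j : Fin r, ∃ c : ℝ, 0 < c ∧ ∀ n : ℕ,
      ∑ x ∈ range n, max (x : ℝ) 1 ^ ((d (j + 2) : ℝ) * b)
        ≤ c * (n : ℝ) ^ max ((d (j + 2) : ℝ) * b + 1) 0 := by
    intro j
    refine exists_sum_range_max_one_rpow_le (mul_nonpos_of_nonneg_of_nonpos (by positivity)
      (hb2.le.trans (by simp))) ?_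
    rcases (hd (j + 2)).lt_or_eq with hlt | heq
    · exact (neg_one_lt_natCast_mul (by omega) hb1' hb2 hlt).ne'
    · rw [heq]
      exact (natCast_mul_lt_neg_one (by omega) hb2).ne
  choose c hc0 hc using hgap
  refine ⟨∏ j, c j, prod_pos fun j _ => hc0 j, fun n hn => ?_⟩
  have hn0 : (0 : ℝ) < n := by exact_mod_cast hn
  have hexp : 1 + ∑ j : Fin r, max ((d (j + 2) : ℝ) * b + 1) 0
      = ((p : ℝ) * b + 1) * L - b * m := by
    rw [Fin.sum_univ_eq_sum_range (fun i => max ((d (i + 2) : ℝ) * b + 1) 0),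
      sum_range_max_mul_add_one_zero hp hb1' hb2 d hd, hm, hL]
    push_cast
    ring
  calc _ = ∑ k ∈ (Fintype.piFinset fun _ : Fin (r + 1) => Icc 1 n).filter
          (fun k => ∀ i j, i ≤ j → k i ≤ k j),
        ∏ j : Fin r, max ((k j.succ : ℝ) - k j.castSucc) 1 ^ ((d (j + 2) : ℝ) * b) :=
        sum_congr rfl fun k _ => prod_attach_range_eq_prod_fin r fun j hj =>
          max ((k ⟨j + 1, by omega⟩ : ℝ) - k ⟨j, by omega⟩) 1 ^ ((d (j + 2) : ℝ) * b)
    _ ≤ n * ∏ j : Fin r, ∑ x ∈ range n, max (x : ℝ) 1 ^ ((d (j + 2) : ℝ) * b) :=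
        sum_monotone_prod_le n r (fun j t => max t 1 ^ ((d (j + 2) : ℝ) * b))
          fun j t => Real.rpow_nonneg (zero_le_one.trans (le_max_right _ _)) _
    _ ≤ n * ∏ j : Fin r, (c j * (n : ℝ) ^ max ((d (j + 2) : ℝ) * b + 1) 0) := by
        gcongr with j
        exact hc j n
    _ = _ := by
        rw [prod_mul_distrib, ← Real.rpow_sum_of_pos hn0, ← hexp, Real.rpow_add hn0,
          Real.rpow_one]
        ring
end
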